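/- arXiv:1912.02269 — 2 statements merged into one kernel-verified Lean document; each statement's English description precedes it below -/
import Mathlib

section
/- If n divides 48 and σ ∈ Gal(ℚ(ζ_n)/ℚ) has order 4, then for any primitive 16th root of unity ζ lying in ℚ(ζ_n), σ²(ζ) = −ζ. -/
lemma aux_sq (m : ℕ) (hm : m ∣ 48) (h16 : m ≠ 16) (h48 : m ≠ 48) :
    ∀ u : (ZMod m)ˣ, u ^ 2 = 1 := by
  have hle : m ≤ 48 := Nat.le_of_dvd (by norm_num) hm
  have h1 : 0 < m := Nat.pos_of_dvd_of_pos hm (by norm_num)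
  interval_cases m <;> revert hm h16 h48 <;> decide

lemma aux_key16 : ∀ u : (ZMod 16)ˣ, u ^ 4 = 1 → u ^ 2 ≠ 1 →
    ((u ^ 2 : (ZMod 16)ˣ) : ZMod 16).val % 16 = 9 := by decide

lemma aux_key48 : ∀ u : (ZMod 48)ˣ, u ^ 4 = 1 → u ^ 2 ≠ 1 →
    ((u ^ 2 : (ZMod 48)ˣ) : ZMod 48).val % 16 = 9 := by decide

lemma aux_n_eq (m : ℕ) (hm : m ∣ 48) (u : (ZMod m)ˣ) (hu : orderOf u = 4) :
    m = 16 ∨ m = 48 := by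
  by_contra hc
  push_neg at hc
  have hsq : u ^ 2 = 1 := aux_sq m hm hc.1 hc.2 u
  have : (4 : ℕ) ∣ 2 := hu ▸ orderOf_dvd_of_pow_eq_one hsq
  norm_num at this

lemma aux_key (m : ℕ) (hm : m ∣ 48) (u : (ZMod m)ˣ) (ho : orderOf u = 4)
    (h4 : u ^ 4 = 1) (h2 : u ^ 2 ≠ 1) :
    ((u ^ 2 : (ZMod m)ˣ) : ZMod m).val % 16 = 9 := by
  rcases aux_n_eq m hm u ho with h | h
  · subst h; exact aux_key16 u h4 h2
  · subst h; exact aux_key48 u h4 h2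

theorem stmt_3 (n : ℕ+) (hn : (n : ℕ) ∣ 48) (K : Type*) [Field K] [Algebra ℚ K]
    [IsCyclotomicExtension {(n : ℕ)} ℚ K] (σ : K ≃ₐ[ℚ] K) (hσ : orderOf σ = 4)
    (ζ : K) (hζ : IsPrimitiveRoot ζ 16) :
    (σ ^ 2) ζ = -ζ := by
  have hirr : Irreducible (Polynomial.cyclotomic (n : ℕ) ℚ) :=
    Polynomial.cyclotomic.irreducible_rat n.pos
  have hξ : IsPrimitiveRoot (IsCyclotomicExtension.zeta n ℚ K) n :=
    IsCyclotomicExtension.zeta_spec n ℚ K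
  set ξ : K := IsCyclotomicExtension.zeta n ℚ K
  let e := IsCyclotomicExtension.autEquivPow K hirr
  set u : (ZMod (n : ℕ))ˣ := e σ with hu
  have hou : orderOf u = 4 := by
    rw [hu, ← hσ]
    exact orderOf_injective e.toMonoidHom e.injective σ
  have hn16 : (16 : ℕ) ∣ (n : ℕ) := by
    rcases aux_n_eq (n : ℕ) hn u hou with h | h <;> rw [h]
    · norm_num
  have hu4 : u ^ 4 = 1 := by rw [← hou]; exact pow_orderOf_eq_one u
  have hu2 : u ^ 2 ≠ 1 := by
    intro h
    have : (4 : ℕ) ∣ 2 := hou ▸ orderOf_dvd_of_pow_eq_one h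
    norm_num at this
  set v : ℕ := ((u ^ 2 : (ZMod (n : ℕ))ˣ) : ZMod (n : ℕ)).val with hv
  have hvmod : v % 16 = 9 := aux_key (n : ℕ) hn u hou hu4 hu2
  -- σ² ξ = ξ ^ v
  have hspec : (σ ^ 2) ξ = ξ ^ v := by
    have hs := (IsCyclotomicExtension.zeta_spec n ℚ K).autToPow_spec ℚ (σ ^ 2)
    have he : (IsCyclotomicExtension.zeta_spec n ℚ K).autToPow ℚ (σ ^ 2) = u ^ 2 := by
      rw [hu]
      have h2 : e (σ ^ 2) = (e σ) ^ 2 := map_pow e σ 2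
      rw [← h2]
      rfl
    rw [he] at hs
    exact hs.symm
  -- ζ is a power of ξ
  have hζn : ζ ^ (n : ℕ) = 1 := by
    obtain ⟨c, hc⟩ := hn16
    rw [hc, pow_mul, hζ.pow_eq_one, one_pow]
  obtain ⟨i, _, hi⟩ := hξ.eq_pow_of_pow_eq_one hζn
  -- compute
  have hcompute : (σ ^ 2) ζ = ζ ^ v := by
    rw [← hi, map_pow, hspec, ← pow_mul, mul_comm, pow_mul]
  rw [hcompute]
  have h16 : ζ ^ (16 : ℕ) = 1 := hζ.pow_eq_one
  have hv9 : ζ ^ v = ζ ^ 9 := by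
    conv_lhs => rw [← Nat.div_add_mod v 16, pow_add, pow_mul, h16, one_pow, one_mul, hvmod]
  rw [hv9]
  have h8sq : (ζ ^ 8) * (ζ ^ 8) = 1 := by rw [← pow_add]; exact h16
  have h8ne : ζ ^ 8 ≠ 1 := hζ.pow_ne_one_of_pos_of_lt (by norm_num) (by norm_num)
  have h8 : ζ ^ 8 = -1 := (mul_self_eq_one_iff.mp h8sq).resolve_left h8ne
  calc ζ ^ 9 = ζ ^ 8 * ζ := by ring
    _ = -ζ := by rw [h8, neg_one_mul]
end

section
/- Let z be a nonzero integer and let θ be a root of unity satisfying z²θ² + (2 − z²)θ + z² = 0. Then θ² + θ + 1 = 0, i.e., θ is a primitive third root of unity. -/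
/-!
Dividing the equation by `θ` gives `z² (θ + θ⁻¹) = z² - 2`. Since `θ` is a root of unity,
`θ + θ⁻¹` is an algebraic integer; being also rational, it is an ordinary integer, so `z² ∣ 2`
and hence `z² = 1`. The equation then reads `θ² + θ + 1 = 0`.
-/

theorem isIntegral_of_pow_eq_one {R A : Type*} [CommRing R] [Ring A] [Algebra R A] {x : A}
    {k : ℕ} (hk : 0 < k) (h : x ^ k = 1) : IsIntegral R x :=
  IsIntegral.of_pow hk (h ▸ isIntegral_one)

theorem isIntegral_add_inv_of_pow_eq_one {K : Type*} [Field K] {θ : K} {k : ℕ} (hk : 0 < k)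
    (h : θ ^ k = 1) : IsIntegral ℤ (θ + θ⁻¹) :=
  (isIntegral_of_pow_eq_one hk h).add (isIntegral_of_pow_eq_one hk (by rw [inv_pow, h, inv_one]))

theorem Int.dvd_of_isIntegral_of_mul_eq {K : Type*} [Field K] [CharZero K] {x : K}
    (hx : IsIntegral ℤ x) {a b : ℤ} (h : (a : K) * x = b) : a ∣ b := by
  rcases eq_or_ne a 0 with rfl | ha
  · rw [Int.cast_zero, zero_mul, eq_comm, Int.cast_eq_zero] at h
    rw [h]
  have hx_rat : x = algebraMap ℚ K ((b : ℚ) / a) := by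
    rw [map_div₀, map_intCast, map_intCast, eq_div_iff (by exact_mod_cast ha), mul_comm, h]
  rw [hx_rat, isIntegral_algebraMap_iff (algebraMap ℚ K).injective,
    IsIntegrallyClosed.isIntegral_iff] at hx
  obtain ⟨n, hn⟩ := hx
  refine ⟨n, ?_⟩
  rw [algebraMap_int_eq, eq_intCast, eq_div_iff (by exact_mod_cast ha)] at hn
  exact_mod_cast hn.symm.trans (mul_comm _ _)

theorem Int.sq_eq_one_of_sq_dvd_two {z : ℤ} (h : z ^ 2 ∣ 2) : z ^ 2 = 1 :=
  Int.isUnit_sq (Int.prime_two.squarefree z (by rwa [← sq]))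

theorem stmt_5_general (z : ℤ) (θ : ℂ) (k : ℕ) (hk : 0 < k) (hroot : θ ^ k = 1)
    (heq : (z : ℂ) ^ 2 * θ ^ 2 + (2 - (z : ℂ) ^ 2) * θ + (z : ℂ) ^ 2 = 0) :
    θ ^ 2 + θ + 1 = 0 := by
  have hθ : θ ≠ 0 := by
    rintro rfl
    simp [hk.ne'] at hroot
  have hsum : ((z ^ 2 : ℤ) : ℂ) * (θ + θ⁻¹) = ((z ^ 2 - 2 : ℤ) : ℂ) := by
    push_cast
    field_simp
    linear_combination heq
  have hz : z ^ 2 = 1 := Int.sq_eq_one_of_sq_dvd_two <| (dvd_sub_right dvd_rfl).mp <|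
    Int.dvd_of_isIntegral_of_mul_eq (isIntegral_add_inv_of_pow_eq_one hk hroot) hsum
  have hzC : (z : ℂ) ^ 2 = 1 := by exact_mod_cast hz
  rw [hzC] at heq
  linear_combination heq

theorem stmt_5 (z : ℤ) (hz : z ≠ 0) (θ : ℂ) (k : ℕ) (hk : 0 < k) (hroot : θ ^ k = 1)
    (heq : (z : ℂ) ^ 2 * θ ^ 2 + (2 - (z : ℂ) ^ 2) * θ + (z : ℂ) ^ 2 = 0) :
    θ ^ 2 + θ + 1 = 0 :=
  stmt_5_general z θ k hk hroot heq
end
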